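/- arXiv:2006.08212 — 3 statements merged into one kernel-verified Lean document; each statement's English description precedes it below -/
import Mathlib

section
/- Let (a_n)_{n≥0} be a sequence of nonnegative reals, α > 0, γ > 0, D > 0, with a_0 ≤ D, and suppose for all k ≥ 1 that a_{k-1} - a_k ≥ γ D^{-1/α} a_{k-1}^{1+1/α}. Then for all n ≥ 1, a_n ≤ (α^α / γ^α) · D / n^α. -/
/-!
With `q = 1/α`, the function `t ↦ t^(-q)` is convex, so its tangent line at `a_{k-1}` together with
the decrement hypothesis gives `a_k^(-q) ≥ a_{k-1}^(-q) + q γ D^(-q)`. Summing, `a_n^(-q) ≥ n γ D^(-q) / α`,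
and raising both sides to the power `-α` is the claimed bound.
-/

open Real

lemma one_add_mul_one_sub_le_rpow_neg {q t : ℝ} (hq : 0 ≤ q) (ht : 0 < t) :
    1 + q * (1 - t) ≤ t ^ (-q) := by
  -- `t^(-q) = exp (-q log t) ≥ 1 - q log t ≥ 1 - q (t - 1)`
  rw [rpow_def_of_pos ht]
  nlinarith [add_one_le_exp (log t * -q), mul_le_mul_of_nonneg_left (log_le_sub_one_of_pos ht) hq]

lemma rpow_neg_add_mul_le_of_mul_rpow_le_sub {q c x y : ℝ} (hq : 0 ≤ q) (hx : 0 < x) (hy : 0 < y)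
    (h : c * x ^ (1 + q) ≤ x - y) : x ^ (-q) + q * c ≤ y ^ (-q) := by
  have hc : c ≤ x ^ (-q) * (1 - y / x) := by
    rw [rpow_add hx, rpow_one] at h
    rw [rpow_neg hx.le, one_sub_div hx.ne', inv_mul_eq_div, div_div, le_div_iff₀ (by positivity)]
    linarith
  calc x ^ (-q) + q * c ≤ x ^ (-q) * (1 + q * (1 - y / x)) := by nlinarith
    _ ≤ x ^ (-q) * (y / x) ^ (-q) := by
      gcongr
      exact one_add_mul_one_sub_le_rpow_neg hq (div_pos hy hx)
    _ = y ^ (-q) := by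
      rw [div_rpow hy.le hx.le, mul_div_cancel₀ _ (rpow_pos_of_pos hx _).ne']

lemma natCast_mul_le_rpow_neg_of_mul_rpow_le_sub {a : ℕ → ℝ} {q c : ℝ} (hq : 0 ≤ q) (hc : 0 ≤ c)
    (ha : ∀ n, 0 ≤ a n) (hrec : ∀ k, c * a k ^ (1 + q) ≤ a k - a (k + 1)) {n : ℕ}
    (hn : 0 < a n) : n * (q * c) ≤ a n ^ (-q) := by
  have hanti : Antitone a := antitone_nat_of_succ_le fun k => by
    linarith [hrec k, mul_nonneg hc (rpow_nonneg (ha k) (1 + q))]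
  induction n with
  | zero => simpa using rpow_nonneg (ha 0) _
  | succ n ih =>
    have hpos : 0 < a n := hn.trans_le (hanti n.le_succ)
    push_cast
    linarith [ih hpos, rpow_neg_add_mul_le_of_mul_rpow_le_sub hq hpos hn (hrec n)]

theorem sequence_polynomial_decay_general (a : ℕ → ℝ) (α γ D : ℝ)
    (hα : 0 < α) (hγ : 0 < γ) (hD : 0 < D)
    (hnn : ∀ n, 0 ≤ a n)
    (hrec : ∀ k : ℕ, 1 ≤ k →
      γ * D ^ (-(1 / α)) * a (k - 1) ^ (1 + 1 / α) ≤ a (k - 1) - a k) :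
    ∀ n : ℕ, 1 ≤ n → a n ≤ α ^ α / γ ^ α * D / (n : ℝ) ^ α := by
  intro n hn
  have hnpos : (0 : ℝ) < n := by exact_mod_cast hn
  have hbound_pos : 0 < α ^ α / γ ^ α * D / (n : ℝ) ^ α := by positivity
  rcases (hnn n).eq_or_lt with hzero | hpos
  · exact hzero ▸ hbound_pos.le
  have hdecay := natCast_mul_le_rpow_neg_of_mul_rpow_le_sub (q := 1 / α)
    (c := γ * D ^ (-(1 / α))) (by positivity) (by positivity) hnn
    (fun k => by simpa only [Nat.add_sub_cancel] using hrec (k + 1) k.succ_pos) hpos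
  have hrate : (n * (1 / α * (γ * D ^ (-(1 / α))))) ^ (-(1 / α))⁻¹ =
      α ^ α / γ ^ α * D / (n : ℝ) ^ α := by
    rw [inv_neg, one_div, inv_inv, mul_rpow, mul_rpow, mul_rpow, ← rpow_mul hD.le,
      neg_mul_neg, inv_mul_cancel₀ hα.ne', rpow_one, inv_rpow hα.le, rpow_neg hα.le,
      rpow_neg hγ.le, rpow_neg hnpos.le, inv_inv]
    · ring
    all_goals positivity
  rw [← hrate, le_rpow_inv_iff_of_neg hpos (by positivity) (by simpa using hα)]
  exact hdecay

/-- If a nonnegative real sequence satisfies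
`a_{k-1} - a_k ≥ γ D^{-1/α} a_{k-1}^{1+1/α}` with `a_0 ≤ D`, then
`a_n ≤ (α^α/γ^α) D / n^α` for all `n ≥ 1`. -/
theorem sequence_polynomial_decay (a : ℕ → ℝ) (α γ D : ℝ)
    (hα : 0 < α) (hγ : 0 < γ) (hD : 0 < D)
    (hnn : ∀ n, 0 ≤ a n) (ha0 : a 0 ≤ D)
    (hrec : ∀ k : ℕ, 1 ≤ k →
      γ * D ^ (-(1 / α)) * a (k - 1) ^ (1 + 1 / α) ≤ a (k - 1) - a k) :
    ∀ n : ℕ, 1 ≤ n → a n ≤ α ^ α / γ ^ α * D / (n : ℝ) ^ α :=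
  sequence_polynomial_decay_general a α γ D hα hγ hD hnn hrec
end

section
/- Under the noiseless linear model and assumptions of Theorem 1 (with regularity index α), the regularity functions φ_n(β) = E⟨θ_n − θ*, Σ^{-β}(θ_n − θ*)⟩ satisfy, for all n ≥ 1 and 0 ≤ β ≤ α, the recurrence inequality φ_n(β) ≤ φ_{n-1}(β) − 2γ φ_{n-1}(β−1) + γ² R₀^{1−β/α} R_α^{β/α} φ_{n-1}(−1). -/
/-
Write `η = θ − θ*`, so that `η_n = η_{n-1} − γ ⟨η_{n-1}, X_n⟩ X_n` with `X_n` independent of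
`η_{n-1}`. Conditionally on `η_{n-1} = t`, the `i`-th coordinate of `η_n` has second moment
`t_i² − 2γ μ_i t_i² + γ² E[⟨t, X⟩² ⟨X, b_i⟩²]`, because `E[⟨t, X⟩ ⟨X, b_i⟩] = μ_i t_i`.
Weighting by `μ_i^{-β}` and summing, the last term becomes `γ² E[⟨t, X⟩² ⟨X, Σ^{-β} X⟩]`, and
Hölder's inequality interpolates `⟨X, Σ^{-β} X⟩ ≤ ‖X‖^{2(1-β/α)} ⟨X, Σ^{-α} X⟩^{β/α}
≤ R₀^{1-β/α} R_α^{β/α}`, leaving `E⟨t, X⟩² = ⟨t, Σ t⟩`. Integrating over `t` gives the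
recurrence; at `β = α` it also propagates the finiteness of `φ_0(α) = ⟨θ*, Σ^{-α} θ*⟩`, which
dominates every `φ_n(β)` with `β ≤ α` because the spectrum of `Σ` is bounded by `R₀`.
-/

open MeasureTheory ProbabilityTheory ENNReal

/-- The quadratic form `θ ↦ ⟨θ, Σ^{-α} θ⟩ ∈ [0,∞]` of the spectrally defined power
`Σ^{-α}` of a positive semidefinite operator `Σ = ∑ μ_i b_i ⊗ b_i`. -/
noncomputable def specPow {H : Type*} [NormedAddCommGroup H] [InnerProductSpace ℝ H]
    (b : HilbertBasis ℕ ℝ H) (μ : ℕ → ℝ) (α : ℝ) (θ : H) : ℝ≥0∞ :=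
  ∑' i : ℕ, (ENNReal.ofReal (μ i)) ^ (-α) * ENNReal.ofReal ((inner ℝ θ (b i) : ℝ) ^ 2)

open scoped RealInnerProductSpace

namespace ProbabilityTheory

variable {Ω α β : Type*} {mΩ : MeasurableSpace Ω} {mα : MeasurableSpace α}
  {mβ : MeasurableSpace β} {P : Measure Ω}

theorem IndepFun.lintegral_comp_eq_lintegral_lintegral [IsFiniteMeasure P] {f : Ω → α}
    {g : Ω → β} (hfg : IndepFun f g P) (hf : Measurable f) (hg : Measurable g)
    {F : α → β → ℝ≥0∞} (hF : Measurable (Function.uncurry F)) :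
    ∫⁻ ω, F (f ω) (g ω) ∂P = ∫⁻ ω, ∫⁻ ω', F (f ω) (g ω') ∂P ∂P := by
  have hmap := (indepFun_iff_map_prod_eq_prod_map_map hf.aemeasurable hg.aemeasurable).1 hfg
  calc ∫⁻ ω, F (f ω) (g ω) ∂P
      = ∫⁻ p, Function.uncurry F p ∂P.map (fun ω ↦ (f ω, g ω)) :=
        (lintegral_map hF (hf.prodMk hg)).symm
    _ = ∫⁻ a, ∫⁻ b, F a b ∂P.map g ∂P.map f := by
        rw [hmap, lintegral_prod _ hF.aemeasurable]
        rfl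
    _ = ∫⁻ ω, ∫⁻ ω', F (f ω) (g ω') ∂P ∂P := by
        rw [lintegral_map hF.lintegral_prod_right hf]
        exact lintegral_congr fun ω ↦ lintegral_map (hF.comp measurable_prodMk_left) hg

section Recursion

variable {E : Type*} [MeasurableSpace E] {X : ℕ → Ω → β} {Z : ℕ → Ω → E}
  {step : E → β → E} (hstep : Measurable (Function.uncurry step)) (z₀ : E)
  (h0 : ∀ ω, Z 0 ω = z₀) (hrec : ∀ n ω, Z (n + 1) ω = step (Z n ω) (X (n + 1) ω))
include hstep h0 hrec

theorem measurable_iSup_comap_of_recursion (n : ℕ) :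
    Measurable[⨆ k ∈ Set.Iic n, mβ.comap (X k)] (Z n) := by
  induction n with
  | zero =>
    rw [show Z 0 = fun _ ↦ z₀ from funext h0]
    exact measurable_const
  | succ n ih =>
    have hX : Measurable[⨆ k ∈ Set.Iic (n + 1), mβ.comap (X k)] (X (n + 1)) :=
      Measurable.of_comap_le (le_iSup₂ (f := fun k (_ : k ∈ Set.Iic (n + 1)) ↦ mβ.comap (X k))
        (n + 1) Set.self_mem_Iic)
    have hmono : ⨆ k ∈ Set.Iic n, mβ.comap (X k) ≤ ⨆ k ∈ Set.Iic (n + 1), mβ.comap (X k) :=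
      biSup_mono fun k hk ↦ (Set.mem_Iic.1 hk).trans n.le_succ
    rw [show Z (n + 1) = fun ω ↦ step (Z n ω) (X (n + 1) ω) from funext (hrec n)]
    exact hstep.comp ((ih.mono hmono le_rfl).prodMk hX)

theorem iIndepFun.indepFun_of_recursion (hX : ∀ n, Measurable (X n)) (hindep : iIndepFun X P)
    (n : ℕ) : IndepFun (Z n) (X (n + 1)) P := by
  have hind := indep_iSup_of_disjoint (fun k ↦ (hX k).comap_le)
    ((iIndepFun_iff_iIndep _ X P).1 hindep) (S := Set.Iic n) (T := {n + 1}) (by simp)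
  refine indep_of_indep_of_le_right (indep_of_indep_of_le_left hind
    (measurable_iSup_comap_of_recursion hstep z₀ h0 hrec n).comap_le) ?_
  exact le_iSup₂ (f := fun k (_ : k ∈ ({n + 1} : Set ℕ)) ↦ mβ.comap (X k)) (n + 1) rfl

end Recursion

end ProbabilityTheory

theorem ENNReal.rpow_neg_le_rpow_sub_mul_rpow_neg {c K : ℝ≥0∞} (hc : c ≠ ⊤) (hK : K ≠ 0)
    (hcK : c ≤ K) {β β' : ℝ} (hββ' : β ≤ β') : c ^ (-β) ≤ K ^ (β' - β) * c ^ (-β') := by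
  rcases eq_or_ne c 0 with rfl | hc0
  · rcases lt_or_ge β 0 with hβ | hβ
    · simp [ENNReal.zero_rpow_of_pos (neg_pos.2 hβ)]
    rcases (hβ.trans hββ').eq_or_lt with hβ' | hβ'
    · obtain rfl : β = 0 := le_antisymm (hβ' ▸ hββ') hβ
      simp [← hβ']
    · have hKpow : K ^ (β' - β) ≠ 0 := by
        simp [ENNReal.rpow_eq_zero_iff, hK, hββ']
      rw [ENNReal.zero_rpow_of_neg (neg_neg_of_pos hβ'), ENNReal.mul_top hKpow]
      exact le_top
  · rw [show -β = (β' - β) + -β' by ring, ENNReal.rpow_add _ _ hc0 hc]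
    gcongr

theorem abs_inner_mul_inner_le {H : Type*} [NormedAddCommGroup H] [InnerProductSpace ℝ H]
    (v w x : H) : |⟪v, x⟫ * ⟪x, w⟫| ≤ ‖v‖ * ‖w‖ * ‖x‖ ^ 2 := by
  rw [abs_mul]
  calc |⟪v, x⟫| * |⟪x, w⟫| ≤ (‖v‖ * ‖x‖) * (‖x‖ * ‖w‖) :=
        mul_le_mul (abs_real_inner_le_norm v x) (abs_real_inner_le_norm x w) (abs_nonneg _)
          (by positivity)
    _ = ‖v‖ * ‖w‖ * ‖x‖ ^ 2 := by ring

section specPow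

variable {H : Type*} [NormedAddCommGroup H] [InnerProductSpace ℝ H]
  (b : HilbertBasis ℕ ℝ H) (μ : ℕ → ℝ)

theorem specPow_neg (β : ℝ) (x : H) : specPow b μ β (-x) = specPow b μ β x := by
  simp [specPow]

theorem specPow_zero (x : H) : specPow b μ 0 x = ENNReal.ofReal (‖x‖ ^ 2) := by
  have hsum : HasSum (fun i ↦ ⟪x, b i⟫ ^ 2) (‖x‖ ^ 2) := by
    simpa [← real_inner_self_eq_norm_sq, real_inner_comm x, sq] using
      b.hasSum_inner_mul_inner x x
  simp only [specPow, neg_zero, ENNReal.rpow_zero, one_mul]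
  rw [← ENNReal.ofReal_tsum_of_nonneg (fun _ ↦ sq_nonneg _) hsum.summable, hsum.tsum_eq]

theorem specPow_le_rpow_mul_rpow {α β : ℝ} (hβ : 0 ≤ β) (hβα : β ≤ α) (x : H) :
    specPow b μ β x ≤ specPow b μ 0 x ^ (1 - β / α) * specPow b μ α x ^ (β / α) := by
  set t := β / α
  have ht0 : 0 ≤ t := div_nonneg hβ (hβ.trans hβα)
  have ht1 : t ≤ 1 := div_le_one_of_le₀ hβα (hβ.trans hβα)
  have hαt : -α * t = -β := by
    rcases (hβ.trans hβα).eq_or_lt with hα | hα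
    · obtain rfl : β = 0 := le_antisymm (hα ▸ hβα) hβ
      simp [← hα]
    · simp only [t]
      field_simp
  set c : ℕ → ℝ≥0∞ := fun i ↦ ENNReal.ofReal (μ i) ^ (-α)
  set a : ℕ → ℝ≥0∞ := fun i ↦ ENNReal.ofReal (⟪x, b i⟫ ^ 2)
  have hterm : ∀ i, ENNReal.ofReal (μ i) ^ (-β) * a i = a i ^ (1 - t) * (c i * a i) ^ t := by
    intro i
    rw [ENNReal.mul_rpow_of_nonneg _ _ ht0, ← ENNReal.rpow_mul, hαt, mul_left_comm,
      ← ENNReal.rpow_add_of_nonneg _ _ (by linarith) ht0, sub_add_cancel, ENNReal.rpow_one]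
  have hholder := ENNReal.lintegral_mul_norm_pow_le (μ := Measure.count) (f := a)
    (g := fun i ↦ c i * a i) (measurable_of_countable _).aemeasurable
    (measurable_of_countable _).aemeasurable (by linarith) ht0 (sub_add_cancel 1 t)
  simp only [lintegral_count, ← hterm] at hholder
  simpa only [specPow, neg_zero, ENNReal.rpow_zero, one_mul] using hholder

theorem specPow_le_of_norm_sq_le {α β R₀ Rα : ℝ} (hβ : 0 ≤ β) (hβα : β ≤ α) (hR₀ : 0 ≤ R₀)
    (hRα : 0 ≤ Rα) {x : H} (hx : ‖x‖ ^ 2 ≤ R₀) (hxα : specPow b μ α x ≤ ENNReal.ofReal Rα) :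
    specPow b μ β x ≤ ENNReal.ofReal (R₀ ^ (1 - β / α) * Rα ^ (β / α)) := by
  have ht0 : 0 ≤ β / α := div_nonneg hβ (hβ.trans hβα)
  have ht1 : 0 ≤ 1 - β / α := sub_nonneg.2 (div_le_one_of_le₀ hβα (hβ.trans hβα))
  calc specPow b μ β x ≤ specPow b μ 0 x ^ (1 - β / α) * specPow b μ α x ^ (β / α) :=
        specPow_le_rpow_mul_rpow b μ hβ hβα x
    _ ≤ ENNReal.ofReal R₀ ^ (1 - β / α) * ENNReal.ofReal Rα ^ (β / α) := by
        rw [specPow_zero]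
        gcongr
    _ = ENNReal.ofReal (R₀ ^ (1 - β / α) * Rα ^ (β / α)) := by
        rw [ENNReal.ofReal_mul (Real.rpow_nonneg hR₀ _), ENNReal.ofReal_rpow_of_nonneg hR₀ ht1,
          ENNReal.ofReal_rpow_of_nonneg hRα ht0]

theorem specPow_le_rpow_sub_mul_specPow {K : ℝ≥0∞} (hK : K ≠ 0)
    (hμK : ∀ i, ENNReal.ofReal (μ i) ≤ K) {β β' : ℝ} (hββ' : β ≤ β') (x : H) :
    specPow b μ β x ≤ K ^ (β' - β) * specPow b μ β' x := by
  rw [specPow, specPow, ← ENNReal.tsum_mul_left]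
  refine ENNReal.tsum_le_tsum fun i ↦ ?_
  rw [← mul_assoc]
  gcongr
  exact ENNReal.rpow_neg_le_rpow_sub_mul_rpow_neg ENNReal.ofReal_ne_top hK (hμK i) hββ'

theorem specPow_sub_one_eq {β : ℝ} (hβ : 0 ≤ β) {x : H} (hx : specPow b μ β x ≠ ⊤) :
    specPow b μ (β - 1) x = ∑' i, ENNReal.ofReal (μ i) ^ (-β)
      * (ENNReal.ofReal (μ i) * ENNReal.ofReal (⟪x, b i⟫ ^ 2)) := by
  refine tsum_congr fun i ↦ ?_
  rcases eq_or_ne (ENNReal.ofReal (μ i)) 0 with hμi | hμi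
  · rw [hμi]
    rcases hβ.eq_or_lt with rfl | hβ
    · simp
    -- a coordinate carrying the weight `0 ^ (-β) = ⊤` must vanish, since `specPow` is finite
    have hxi : ENNReal.ofReal (⟪x, b i⟫ ^ 2) = 0 := by
      by_contra hne
      refine hx (eq_top_iff.2 ?_)
      calc ⊤ = ENNReal.ofReal (μ i) ^ (-β) * ENNReal.ofReal (⟪x, b i⟫ ^ 2) := by
            rw [hμi, ENNReal.zero_rpow_of_neg (neg_neg_of_pos hβ), ENNReal.top_mul hne]
        _ ≤ specPow b μ β x := ENNReal.le_tsum (f := fun i ↦ _) i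
    simp [hxi]
  · rw [show -(β - 1) = -β + 1 by ring, ENNReal.rpow_add _ _ hμi ENNReal.ofReal_ne_top,
      ENNReal.rpow_one, mul_assoc]

theorem lintegral_specPow_le_rpow_sub_mul {Ω : Type*} [MeasurableSpace Ω] (P : Measure Ω)
    {K : ℝ≥0∞} (hK : K ≠ 0) (hK' : K ≠ ⊤) (hμK : ∀ i, ENNReal.ofReal (μ i) ≤ K) {β β' : ℝ}
    (hββ' : β ≤ β') (Z : Ω → H) :
    ∫⁻ ω, specPow b μ β (Z ω) ∂P ≤ K ^ (β' - β) * ∫⁻ ω, specPow b μ β' (Z ω) ∂P := by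
  rw [← lintegral_const_mul' _ _ (ENNReal.rpow_ne_top_of_nonneg (sub_nonneg.2 hββ') hK')]
  exact lintegral_mono fun ω ↦ specPow_le_rpow_sub_mul_specPow b μ hK hμK hββ' (Z ω)

variable [MeasurableSpace H] [OpensMeasurableSpace H]

theorem measurable_specPow (β : ℝ) : Measurable (specPow b μ β) :=
  Measurable.tsum fun _ ↦
    ((continuous_id.inner continuous_const).measurable.pow_const 2).ennreal_ofReal.const_mul _

theorem lintegral_mul_specPow {Ω : Type*} [MeasurableSpace Ω] (P : Measure Ω)
    {f : Ω → ℝ≥0∞} (hf : Measurable f) {Z : Ω → H} (hZ : Measurable Z) (β : ℝ) :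
    ∫⁻ ω, f ω * specPow b μ β (Z ω) ∂P
      = ∑' i, ENNReal.ofReal (μ i) ^ (-β) * ∫⁻ ω, f ω * ENNReal.ofReal (⟪Z ω, b i⟫ ^ 2) ∂P := by
  have hcoord : ∀ i, Measurable fun ω ↦ ⟪Z ω, b i⟫ :=
    fun i ↦ (continuous_id.inner continuous_const).measurable.comp hZ
  have hmeas : ∀ i, Measurable fun ω ↦ f ω * ENNReal.ofReal (⟪Z ω, b i⟫ ^ 2) :=
    fun i ↦ hf.mul ((hcoord i).pow_const 2).ennreal_ofReal
  simp_rw [specPow, ← ENNReal.tsum_mul_left, mul_left_comm (f _)]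
  rw [lintegral_tsum fun i ↦ ((hmeas i).const_mul _).aemeasurable]
  exact tsum_congr fun i ↦ lintegral_const_mul _ (hmeas i)

end specPow

section sgdStep

variable {H : Type*} [NormedAddCommGroup H] [InnerProductSpace ℝ H]

/-- One step of noiseless SGD, written for the error `t = θ - θ*` and the sample `x`. -/
def sgdStep (γ : ℝ) (t x : H) : H := t - (γ * ⟪t, x⟫) • x

theorem inner_sgdStep (γ : ℝ) (t x v : H) :
    ⟪sgdStep γ t x, v⟫ = ⟪t, v⟫ - γ * (⟪t, x⟫ * ⟪x, v⟫) := by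
  rw [sgdStep, inner_sub_left, real_inner_smul_left, mul_assoc]

theorem measurable_sgdStep [MeasurableSpace H] [BorelSpace H] [SecondCountableTopology H]
    (γ : ℝ) : Measurable (Function.uncurry (sgdStep (H := H) γ)) :=
  measurable_fst.sub ((measurable_const.mul (measurable_fst.inner measurable_snd)).smul
    measurable_snd)

end sgdStep

section SecondMoments

variable {Ω : Type*} [MeasurableSpace Ω] {P : Measure Ω}

theorem integrable_sub_mul_sq [IsFiniteMeasure P] {g : Ω → ℝ} (hg : Integrable g P)
    (hg2 : Integrable (fun ω ↦ g ω ^ 2) P) (a c : ℝ) :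
    Integrable (fun ω ↦ (a - c * g ω) ^ 2) P := by
  have hexpand : Integrable (fun ω ↦ a ^ 2 - 2 * c * a * g ω + c ^ 2 * g ω ^ 2) P :=
    ((integrable_const _).sub (hg.const_mul _)).add (hg2.const_mul _)
  exact hexpand.congr (ae_of_all _ fun ω ↦ by ring)

theorem integral_sub_mul_sq [IsProbabilityMeasure P] {g : Ω → ℝ} (hg : Integrable g P)
    (hg2 : Integrable (fun ω ↦ g ω ^ 2) P) (a c : ℝ) :
    ∫ ω, (a - c * g ω) ^ 2 ∂P = a ^ 2 - 2 * c * a * ∫ ω, g ω ∂P + c ^ 2 * ∫ ω, g ω ^ 2 ∂P := by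
  have hint : Integrable (fun ω ↦ a ^ 2 - 2 * c * a * g ω) P :=
    (integrable_const _).sub (hg.const_mul _)
  rw [integral_congr_ae (ae_of_all _ fun ω ↦ show (a - c * g ω) ^ 2
      = (a ^ 2 - 2 * c * a * g ω) + c ^ 2 * g ω ^ 2 by ring),
    integral_add hint (hg2.const_mul _), integral_sub (integrable_const _) (hg.const_mul _),
    integral_const_mul, integral_const_mul, integral_const, probReal_univ, one_smul]

variable {H : Type*} [NormedAddCommGroup H] [InnerProductSpace ℝ H] {Y : Ω → H} {R₀ : ℝ}

theorem covariance_nonneg (b : HilbertBasis ℕ ℝ H) {μ : ℕ → ℝ}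
    (hcov : ∀ i j, ∫ ω, ⟪Y ω, b i⟫ * ⟪Y ω, b j⟫ ∂P = if i = j then μ i else 0) (i : ℕ) :
    0 ≤ μ i := by
  simpa [hcov i i] using integral_nonneg (μ := P) (f := fun ω ↦ ⟪Y ω, b i⟫ * ⟪Y ω, b i⟫)
    fun ω ↦ mul_self_nonneg _

variable [MeasurableSpace H] [BorelSpace H] [SecondCountableTopology H]
  (hY : Measurable Y) (hYR : ∀ᵐ ω ∂P, ‖Y ω‖ ^ 2 ≤ R₀)
include hY hYR

section FiniteMeasure

variable [IsFiniteMeasure P]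

theorem integrable_inner_mul_inner (v w : H) :
    Integrable (fun ω ↦ ⟪v, Y ω⟫ * ⟪Y ω, w⟫) P := by
  refine Integrable.of_bound ((hY.const_inner.mul hY.inner_const).aestronglyMeasurable)
    (‖v‖ * ‖w‖ * R₀) ?_
  filter_upwards [hYR] with ω hω
  exact (abs_inner_mul_inner_le v w _).trans (by gcongr)

theorem integrable_sq_inner_mul_inner (v w : H) :
    Integrable (fun ω ↦ (⟪v, Y ω⟫ * ⟪Y ω, w⟫) ^ 2) P := by
  refine Integrable.of_bound
    (((hY.const_inner.mul hY.inner_const).pow_const 2).aestronglyMeasurable)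
    ((‖v‖ * ‖w‖ * R₀) ^ 2) ?_
  filter_upwards [hYR] with ω hω
  rw [Real.norm_eq_abs, abs_pow]
  exact pow_le_pow_left₀ (abs_nonneg _) ((abs_inner_mul_inner_le v w _).trans (by gcongr)) 2

theorem integrable_inner_smul (v : H) : Integrable (fun ω ↦ ⟪Y ω, v⟫ • Y ω) P := by
  refine Integrable.of_bound ((hY.inner_const.smul hY).aestronglyMeasurable) (‖v‖ * R₀) ?_
  filter_upwards [hYR] with ω hω
  calc ‖⟪Y ω, v⟫ • Y ω‖ ≤ ‖Y ω‖ * ‖v‖ * ‖Y ω‖ := by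
        rw [norm_smul, Real.norm_eq_abs]
        gcongr
        exact abs_real_inner_le_norm _ _
    _ = ‖v‖ * ‖Y ω‖ ^ 2 := by ring
    _ ≤ ‖v‖ * R₀ := by gcongr

variable [CompleteSpace H] (b : HilbertBasis ℕ ℝ H) {μ : ℕ → ℝ}
  (hcov : ∀ i j, ∫ ω, ⟪Y ω, b i⟫ * ⟪Y ω, b j⟫ ∂P = if i = j then μ i else 0)
include hcov

-- Both identities read off coordinates of the vectors `∫ ⟪Y, w⟫ Y = Σ w`.
theorem integral_inner_mul_inner_basis (v : H) (i : ℕ) :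
    ∫ ω, ⟪v, Y ω⟫ * ⟪Y ω, b i⟫ ∂P = μ i * ⟪v, b i⟫ := by
  have hint := integrable_inner_smul hY hYR (b i)
  set m := ∫ ω, ⟪Y ω, b i⟫ • Y ω ∂P
  have hcoord : ∀ j, ⟪b j, m⟫ = if i = j then μ i else 0 := by
    intro j
    rw [← integral_inner hint, ← hcov i j]
    congr 1 with ω
    rw [inner_smul_right, real_inner_comm (b j)]
  calc ∫ ω, ⟪v, Y ω⟫ * ⟪Y ω, b i⟫ ∂P = ⟪v, m⟫ := by
        rw [← integral_inner hint]
        congr 1 with ω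
        rw [inner_smul_right, mul_comm]
    _ = ∑' j, ⟪v, b j⟫ * ⟪b j, m⟫ := (b.tsum_inner_mul_inner v m).symm
    _ = μ i * ⟪v, b i⟫ := by simp [hcoord, mul_comm]

theorem hasSum_integral_inner_sq (v : H) :
    HasSum (fun j ↦ μ j * ⟪v, b j⟫ ^ 2) (∫ ω, ⟪v, Y ω⟫ ^ 2 ∂P) := by
  have hint := integrable_inner_smul hY hYR v
  set m := ∫ ω, ⟪Y ω, v⟫ • Y ω ∂P
  have hcoord : ∀ j, ⟪b j, m⟫ = μ j * ⟪v, b j⟫ := by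
    intro j
    rw [← integral_inner hint, ← integral_inner_mul_inner_basis hY hYR b hcov]
    congr 1 with ω
    rw [inner_smul_right, real_inner_comm v, real_inner_comm (b j), mul_comm]
  have hm : ∫ ω, ⟪v, Y ω⟫ ^ 2 ∂P = ⟪v, m⟫ := by
    rw [← integral_inner hint]
    congr 1 with ω
    rw [inner_smul_right, real_inner_comm v, sq]
  have hterm : (fun j ↦ μ j * ⟪v, b j⟫ ^ 2) = fun j ↦ ⟪v, b j⟫ * ⟪b j, m⟫ := by
    funext j
    rw [hcoord]
    ring
  rw [hm, hterm]
  exact b.hasSum_inner_mul_inner v m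

theorem lintegral_ofReal_inner_sq (v : H) :
    ∫⁻ ω, ENNReal.ofReal (⟪v, Y ω⟫ ^ 2) ∂P = specPow b μ (-1) v := by
  have hs := hasSum_integral_inner_sq hY hYR b hcov v
  have hint : Integrable (fun ω ↦ ⟪v, Y ω⟫ ^ 2) P := by
    simpa only [real_inner_comm (Y _) v, sq] using integrable_inner_mul_inner hY hYR v v
  rw [← ofReal_integral_eq_lintegral_ofReal hint (ae_of_all _ fun _ ↦ sq_nonneg _),
    ← hs.tsum_eq, ENNReal.ofReal_tsum_of_nonneg
      (fun j ↦ mul_nonneg (covariance_nonneg b hcov j) (sq_nonneg _)) hs.summable]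
  simp_rw [specPow, neg_neg, ENNReal.rpow_one, ENNReal.ofReal_mul (covariance_nonneg b hcov _)]

end FiniteMeasure

variable [IsProbabilityMeasure P] (b : HilbertBasis ℕ ℝ H) {μ : ℕ → ℝ}
  (hcov : ∀ i j, ∫ ω, ⟪Y ω, b i⟫ * ⟪Y ω, b j⟫ ∂P = if i = j then μ i else 0)
include hcov

theorem covariance_le (i : ℕ) : μ i ≤ R₀ := by
  have hbi : ‖b i‖ = 1 := b.orthonormal.1 i
  have hμi := hcov i i
  rw [if_pos rfl] at hμi
  calc μ i = ∫ ω, ⟪b i, Y ω⟫ * ⟪Y ω, b i⟫ ∂P := by simp_rw [← hμi, real_inner_comm (b i)]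
    _ ≤ ∫ _, R₀ ∂P := by
        refine integral_mono_ae (integrable_inner_mul_inner hY hYR _ _) (integrable_const _) ?_
        filter_upwards [hYR] with ω hω
        calc ⟪b i, Y ω⟫ * ⟪Y ω, b i⟫ ≤ ‖b i‖ * ‖b i‖ * ‖Y ω‖ ^ 2 :=
              (le_abs_self _).trans (abs_inner_mul_inner_le _ _ _)
          _ ≤ R₀ := by rwa [hbi, one_mul, one_mul]
    _ = R₀ := by simp

variable [CompleteSpace H] {γ : ℝ} (hγ : 0 ≤ γ)
include hγ

theorem lintegral_sq_inner_sgdStep_basis (t : H) (i : ℕ) :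
    ∫⁻ ω, ENNReal.ofReal (⟪sgdStep γ t (Y ω), b i⟫ ^ 2) ∂P
        + ENNReal.ofReal (2 * γ) * (ENNReal.ofReal (μ i) * ENNReal.ofReal (⟪t, b i⟫ ^ 2))
      = ENNReal.ofReal (⟪t, b i⟫ ^ 2) + ENNReal.ofReal (γ ^ 2)
        * ∫⁻ ω, ENNReal.ofReal (⟪t, Y ω⟫ ^ 2) * ENNReal.ofReal (⟪Y ω, b i⟫ ^ 2) ∂P := by
  have hg := integrable_inner_mul_inner hY hYR t (b i)
  have hg2 := integrable_sq_inner_mul_inner hY hYR t (b i)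
  have hreal : ∫ ω, (⟪t, b i⟫ - γ * (⟪t, Y ω⟫ * ⟪Y ω, b i⟫)) ^ 2 ∂P
        + 2 * γ * (μ i * ⟪t, b i⟫ ^ 2)
      = ⟪t, b i⟫ ^ 2 + γ ^ 2 * ∫ ω, (⟪t, Y ω⟫ * ⟪Y ω, b i⟫) ^ 2 ∂P := by
    rw [integral_sub_mul_sq hg hg2, integral_inner_mul_inner_basis hY hYR b hcov]
    ring
  have hμi := covariance_nonneg b hcov i
  simp_rw [inner_sgdStep, ← ENNReal.ofReal_mul (sq_nonneg _), ← mul_pow]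
  rw [← ofReal_integral_eq_lintegral_ofReal (integrable_sub_mul_sq hg hg2 _ _)
      (ae_of_all _ fun _ ↦ sq_nonneg _),
    ← ofReal_integral_eq_lintegral_ofReal hg2 (ae_of_all _ fun _ ↦ sq_nonneg _),
    ← ENNReal.ofReal_mul hμi, ← ENNReal.ofReal_mul (by positivity),
    ← ENNReal.ofReal_mul (sq_nonneg _),
    ← ENNReal.ofReal_add (integral_nonneg fun _ ↦ sq_nonneg _) (by positivity),
    ← ENNReal.ofReal_add (sq_nonneg _)
      (mul_nonneg (sq_nonneg _) (integral_nonneg fun _ ↦ sq_nonneg _)), hreal]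

theorem lintegral_specPow_sgdStep (β : ℝ) (t : H) :
    ∫⁻ ω, specPow b μ β (sgdStep γ t (Y ω)) ∂P
        + ENNReal.ofReal (2 * γ) * ∑' i, ENNReal.ofReal (μ i) ^ (-β)
          * (ENNReal.ofReal (μ i) * ENNReal.ofReal (⟪t, b i⟫ ^ 2))
      = specPow b μ β t + ENNReal.ofReal (γ ^ 2)
        * ∫⁻ ω, ENNReal.ofReal (⟪t, Y ω⟫ ^ 2) * specPow b μ β (Y ω) ∂P := by
  have hfirst := lintegral_mul_specPow b μ P (f := 1) (Z := fun ω ↦ sgdStep γ t (Y ω))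
    measurable_const ((measurable_sgdStep γ).comp (measurable_const.prodMk hY)) β
  simp only [Pi.one_apply, one_mul] at hfirst
  rw [hfirst, lintegral_mul_specPow b μ P (hY.const_inner.pow_const 2).ennreal_ofReal hY β,
    specPow, ← ENNReal.tsum_mul_left, ← ENNReal.tsum_mul_left,
    ← ENNReal.tsum_add, ← ENNReal.tsum_add]
  refine tsum_congr fun i ↦ ?_
  rw [mul_left_comm (ENNReal.ofReal (2 * γ)), ← mul_add,
    lintegral_sq_inner_sgdStep_basis hY hYR b hcov hγ, mul_add, mul_left_comm]

theorem lintegral_specPow_sgdStep_le {α β Rα : ℝ} (hβ : 0 ≤ β) (hβα : β ≤ α) (hR₀ : 0 ≤ R₀)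
    (hRα : 0 ≤ Rα) (hYα : ∀ᵐ ω ∂P, specPow b μ α (Y ω) ≤ ENNReal.ofReal Rα) (t : H) :
    ∫⁻ ω, specPow b μ β (sgdStep γ t (Y ω)) ∂P + ENNReal.ofReal (2 * γ) * specPow b μ (β - 1) t
      ≤ specPow b μ β t
        + ENNReal.ofReal (γ ^ 2 * R₀ ^ (1 - β / α) * Rα ^ (β / α)) * specPow b μ (-1) t := by
  rcases eq_or_ne (specPow b μ β t) ⊤ with ht | ht
  · simp [ht]
  set C := R₀ ^ (1 - β / α) * Rα ^ (β / α)
  have hmoment : ∫⁻ ω, ENNReal.ofReal (⟪t, Y ω⟫ ^ 2) * specPow b μ β (Y ω) ∂P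
      ≤ ENNReal.ofReal C * specPow b μ (-1) t :=
    calc ∫⁻ ω, ENNReal.ofReal (⟪t, Y ω⟫ ^ 2) * specPow b μ β (Y ω) ∂P
        ≤ ∫⁻ ω, ENNReal.ofReal (⟪t, Y ω⟫ ^ 2) * ENNReal.ofReal C ∂P := by
          refine lintegral_mono_ae ?_
          filter_upwards [hYR, hYα] with ω hω hωα
          gcongr
          exact specPow_le_of_norm_sq_le b μ hβ hβα hR₀ hRα hω hωα
      _ = ENNReal.ofReal C * specPow b μ (-1) t := by
          rw [lintegral_mul_const' _ _ ENNReal.ofReal_ne_top,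
            lintegral_ofReal_inner_sq hY hYR b hcov, mul_comm]
  rw [specPow_sub_one_eq b μ hβ ht, lintegral_specPow_sgdStep hY hYR b hcov hγ,
    mul_assoc (γ ^ 2), ENNReal.ofReal_mul (sq_nonneg γ), mul_assoc]
  gcongr

theorem lintegral_specPow_sgdStep_le_of_indepFun {α β Rα : ℝ} (hβ : 0 ≤ β) (hβα : β ≤ α)
    (hR₀ : 0 ≤ R₀) (hRα : 0 ≤ Rα) (hYα : ∀ᵐ ω ∂P, specPow b μ α (Y ω) ≤ ENNReal.ofReal Rα)
    {Z Y' : Ω → H} (hZ : Measurable Z) (hY' : Measurable Y') (hind : IndepFun Z Y' P)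
    (hid : IdentDistrib Y' Y P P) :
    ∫⁻ ω, specPow b μ β (sgdStep γ (Z ω) (Y' ω)) ∂P
        + ENNReal.ofReal (2 * γ) * ∫⁻ ω, specPow b μ (β - 1) (Z ω) ∂P
      ≤ ∫⁻ ω, specPow b μ β (Z ω) ∂P
        + ENNReal.ofReal (γ ^ 2 * R₀ ^ (1 - β / α) * Rα ^ (β / α))
          * ∫⁻ ω, specPow b μ (-1) (Z ω) ∂P := by
  set F : H → H → ℝ≥0∞ := fun t x ↦ specPow b μ β (sgdStep γ t x)
  have hF : Measurable (Function.uncurry F) :=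
    (measurable_specPow b μ β).comp (measurable_sgdStep γ)
  have hpow : ∀ β', Measurable fun ω ↦ specPow b μ β' (Z ω) :=
    fun β' ↦ (measurable_specPow b μ β').comp hZ
  -- `Z` and `Y'` are independent, so `Y'` may be replaced by an independent copy of `Y`
  have hfreeze : ∫⁻ ω, F (Z ω) (Y' ω) ∂P = ∫⁻ ω, ∫⁻ ω', F (Z ω) (Y ω') ∂P ∂P := by
    rw [hind.lintegral_comp_eq_lintegral_lintegral hZ hY' hF]
    exact lintegral_congr fun ω ↦ (hid.comp (hF.comp measurable_prodMk_left)).lintegral_eq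
  calc ∫⁻ ω, F (Z ω) (Y' ω) ∂P + ENNReal.ofReal (2 * γ) * ∫⁻ ω, specPow b μ (β - 1) (Z ω) ∂P
      = ∫⁻ ω, (∫⁻ ω', F (Z ω) (Y ω') ∂P
          + ENNReal.ofReal (2 * γ) * specPow b μ (β - 1) (Z ω)) ∂P := by
        rw [hfreeze, lintegral_add_right _ ((hpow _).const_mul _), lintegral_const_mul _ (hpow _)]
    _ ≤ ∫⁻ ω, (specPow b μ β (Z ω) + ENNReal.ofReal (γ ^ 2 * R₀ ^ (1 - β / α) * Rα ^ (β / α))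
          * specPow b μ (-1) (Z ω)) ∂P :=
        lintegral_mono fun ω ↦
          lintegral_specPow_sgdStep_le hY hYR b hcov hγ hβ hβα hR₀ hRα hYα (Z ω)
    _ = _ := by rw [lintegral_add_left (hpow _), lintegral_const_mul _ (hpow _)]

end SecondMoments

theorem sgd_regularity_recurrence_general
    {H : Type*} [NormedAddCommGroup H] [InnerProductSpace ℝ H] [CompleteSpace H]
    [MeasurableSpace H] [BorelSpace H] [SecondCountableTopology H]
    {Ω : Type*} [MeasurableSpace Ω] (P : Measure Ω) [IsProbabilityMeasure P]
    (b : HilbertBasis ℕ ℝ H) (μ : ℕ → ℝ)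
    (X : ℕ → Ω → H) (hXmeas : ∀ n, Measurable (X n))
    (hindep : iIndepFun (m := fun _ => ‹MeasurableSpace H›) X P)
    (hident : ∀ n, IdentDistrib (X n) (X 0) P P)
    (hcov : ∀ i j, (∫ ω, (inner ℝ (X 0 ω) (b i) : ℝ) * (inner ℝ (X 0 ω) (b j) : ℝ) ∂P)
      = if i = j then μ i else 0)
    (θstar : H) (α γ R₀ Rα : ℝ) (hα : 0 ≤ α) (hR₀ : 0 ≤ R₀) (hRα : 0 ≤ Rα)
    (hbound : ∀ n, ∀ᵐ ω ∂P, ‖X n ω‖ ^ 2 ≤ R₀)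
    (hsrc : specPow b μ α θstar ≠ ⊤)
    (hreg : ∀ n, ∀ᵐ ω ∂P, specPow b μ α (X n ω) ≤ ENNReal.ofReal Rα)
    (hγ0 : 0 < γ)
    (θ : ℕ → Ω → H) (h0 : ∀ ω, θ 0 ω = 0)
    (hrec : ∀ n ω, θ (n + 1) ω = θ n ω
      - (γ * (inner ℝ (θ n ω - θstar) (X (n + 1) ω) : ℝ)) • X (n + 1) ω) :
    (∀ (n : ℕ) (β : ℝ), β ≤ α →
        (∫⁻ ω, specPow b μ β (θ n ω - θstar) ∂P) ≠ ⊤) ∧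
      ∀ (n : ℕ) (β : ℝ), 0 ≤ β → β ≤ α →
        (∫⁻ ω, specPow b μ β (θ (n + 1) ω - θstar) ∂P)
            + ENNReal.ofReal (2 * γ) * (∫⁻ ω, specPow b μ (β - 1) (θ n ω - θstar) ∂P)
          ≤ (∫⁻ ω, specPow b μ β (θ n ω - θstar) ∂P)
            + ENNReal.ofReal (γ ^ 2 * R₀ ^ (1 - β / α) * Rα ^ (β / α))
              * (∫⁻ ω, specPow b μ (-1 : ℝ) (θ n ω - θstar) ∂P) := by
  set err : ℕ → Ω → H := fun n ω ↦ θ n ω - θstar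
  have herr0 : ∀ ω, err 0 ω = -θstar := fun ω ↦ by simp [err, h0]
  have herrRec : ∀ n ω, err (n + 1) ω = sgdStep γ (err n ω) (X (n + 1) ω) := fun n ω ↦ by
    simp only [err, sgdStep, hrec, sub_right_comm]
  have herrMeas : ∀ n, Measurable (err n) := fun n ↦
    (measurable_iSup_comap_of_recursion (measurable_sgdStep γ) _ herr0 herrRec n).mono
      (iSup₂_le fun k _ ↦ (hXmeas k).comap_le) le_rfl
  have hstep : ∀ (n : ℕ) (β : ℝ), 0 ≤ β → β ≤ α → _ := fun n β hβ hβα ↦ by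
    simpa only [← herrRec] using lintegral_specPow_sgdStep_le_of_indepFun (hXmeas 0) (hbound 0)
      b hcov hγ0.le hβ hβα hR₀ hRα (hreg 0) (herrMeas n) (hXmeas (n + 1))
      (hindep.indepFun_of_recursion (measurable_sgdStep γ) _ herr0 herrRec hXmeas n)
      (hident (n + 1))
  -- `K` bounds the spectrum `μ ≤ R₀` and is nonzero even when `R₀ = 0`
  set K := ENNReal.ofReal R₀ + 1
  have hKpow : ∀ β ≤ α, K ^ (α - β) ≠ ⊤ := fun β hβ ↦
    ENNReal.rpow_ne_top_of_nonneg (by linarith) (by simp [K])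
  have hcomp : ∀ n, ∀ β ≤ α, ∫⁻ ω, specPow b μ β (err n ω) ∂P
      ≤ K ^ (α - β) * ∫⁻ ω, specPow b μ α (err n ω) ∂P := fun n β hβ ↦
    lintegral_specPow_le_rpow_sub_mul b μ P (by simp) (by simp)
      (fun i ↦ (ENNReal.ofReal_le_ofReal
        (covariance_le (hXmeas 0) (hbound 0) b hcov i)).trans le_self_add) hβ (err n)
  have hfin : ∀ n, ∫⁻ ω, specPow b μ α (err n ω) ∂P ≠ ⊤ := by
    intro n
    induction n with
    | zero => simpa [herr0, specPow_neg] using hsrc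
    | succ n ih =>
      refine ne_top_of_le_ne_top ?_ (le_self_add.trans (hstep n α hα le_rfl))
      exact ENNReal.add_ne_top.2 ⟨ih, ENNReal.mul_ne_top ENNReal.ofReal_ne_top
        (ne_top_of_le_ne_top (ENNReal.mul_ne_top (hKpow _ (by linarith)) ih)
          (hcomp n (-1) (by linarith)))⟩
  exact ⟨fun n β hβ ↦ ne_top_of_le_ne_top (ENNReal.mul_ne_top (hKpow β hβ) (hfin n))
    (hcomp n β hβ), hstep⟩

/-- Property 2: under the assumptions of Theorem 1, the regularity
functions `φ_n(β) = E⟨θ_n − θ*, Σ^{-β}(θ_n − θ*)⟩` are finite for `β ≤ α` and satisfy,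
for `0 ≤ β ≤ α`,
`φ_n(β) ≤ φ_{n-1}(β) − 2γ φ_{n-1}(β−1) + γ² R₀^{1−β/α} R_α^{β/α} φ_{n-1}(−1)`
(stated in rearranged form, valid in `[0,∞]`). -/
theorem sgd_regularity_recurrence
    {H : Type*} [NormedAddCommGroup H] [InnerProductSpace ℝ H] [CompleteSpace H]
    [MeasurableSpace H] [BorelSpace H] [SecondCountableTopology H]
    {Ω : Type*} [MeasurableSpace Ω] (P : Measure Ω) [IsProbabilityMeasure P]
    (b : HilbertBasis ℕ ℝ H) (μ : ℕ → ℝ) (hμ : ∀ i, 0 ≤ μ i)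
    (X : ℕ → Ω → H) (hXmeas : ∀ n, Measurable (X n))
    (hindep : iIndepFun (m := fun _ => ‹MeasurableSpace H›) X P)
    (hident : ∀ n, IdentDistrib (X n) (X 0) P P)
    (hcov : ∀ i j, (∫ ω, (inner ℝ (X 0 ω) (b i) : ℝ) * (inner ℝ (X 0 ω) (b j) : ℝ) ∂P)
      = if i = j then μ i else 0)
    (θstar : H) (α γ R₀ Rα : ℝ) (hα : 0 ≤ α) (hR₀ : 0 ≤ R₀) (hRα : 0 ≤ Rα)
    (hbound : ∀ n, ∀ᵐ ω ∂P, ‖X n ω‖ ^ 2 ≤ R₀)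
    (hsrc : specPow b μ α θstar ≠ ⊤)
    (hreg : ∀ n, ∀ᵐ ω ∂P, specPow b μ α (X n ω) ≤ ENNReal.ofReal Rα)
    (hγ0 : 0 < γ) (hγ : γ ≤ 1 / R₀)
    (θ : ℕ → Ω → H) (h0 : ∀ ω, θ 0 ω = 0)
    (hrec : ∀ n ω, θ (n + 1) ω = θ n ω
      - (γ * (inner ℝ (θ n ω - θstar) (X (n + 1) ω) : ℝ)) • X (n + 1) ω) :
    (∀ (n : ℕ) (β : ℝ), β ≤ α →
        (∫⁻ ω, specPow b μ β (θ n ω - θstar) ∂P) ≠ ⊤) ∧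
      ∀ (n : ℕ) (β : ℝ), 0 ≤ β → β ≤ α →
        (∫⁻ ω, specPow b μ β (θ (n + 1) ω - θstar) ∂P)
            + ENNReal.ofReal (2 * γ) * (∫⁻ ω, specPow b μ (β - 1) (θ n ω - θstar) ∂P)
          ≤ (∫⁻ ω, specPow b μ β (θ n ω - θstar) ∂P)
            + ENNReal.ofReal (γ ^ 2 * R₀ ^ (1 - β / α) * Rα ^ (β / α))
              * (∫⁻ ω, specPow b μ (-1 : ℝ) (θ n ω - θstar) ∂P) :=
  sgd_regularity_recurrence_general P b μ X hXmeas hindep hident hcov θstar α γ R₀ Rα hα hR₀ hRα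
    hbound hsrc hreg hγ0 θ h0 hrec
end

section
/- Under the noiseless linear model with 0 < γ ≤ 1/R₀ and the assumption that θ* ∉ Σ^{ᾱ/2}(H) (i.e. ‖Σ^{-ᾱ/2}θ*‖ = ∞) for some ᾱ > 0, the reconstruction error E[‖θ_n − θ*‖²] of the SGD iterates is not asymptotically dominated by 1/n^{ᾱ+ε} for any ε > 0, i.e. limsup n^{ᾱ+ε} E[‖θ_n − θ*‖²] = ∞. -/
/-!
The mean error `m n = E[θ n - θ*]` follows the deterministic recursion `m (n+1) = (1 - γΣ) m n`,
because `θ n` is independent of `X (n+1)`; in the eigenbasis, `⟪m n, b i⟫ = -(1 - γμᵢ)ⁿ ⟪θ*, b i⟫`.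
By Jensen, `E‖θ n - θ*‖² ≥ ‖m n‖² = ∑ᵢ qᵢⁿ cᵢ²` with `qᵢ = (1 - γμᵢ)²` and `cᵢ = ⟪θ*, b i⟫`.
Truncating the generalized binomial series gives `(1 - q)^(-ᾱ) ≲ 1 + ∑ₙ (n+1)^(ᾱ-1) q^(n+1)`,
and `1 - qᵢ ≤ 2γμᵢ`. Hence `∑ᵢ μᵢ^(-ᾱ) cᵢ² = ∞` forces `∑ₙ (n+1)^(ᾱ-1) ‖m (n+1)‖² = ∞`,
which is impossible if `n^(ᾱ+ε) ‖m n‖²` stays bounded.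
-/

open MeasureTheory ProbabilityTheory ENNReal Filter

open scoped RealInnerProductSpace

theorem rpow_neg_le_sum_Ico {α d : ℝ} (hα : 0 < α) (hd0 : 0 < d) (hd : d ≤ 1 / 8) :
    d ^ (-α) ≤ 4 * 8 ^ α * ∑ n ∈ Finset.Ico ⌈1 / (8 * d)⌉₊ (2 * ⌈1 / (8 * d)⌉₊),
      ((n + 1 : ℕ) : ℝ) ^ (α - 1) * (1 - d) ^ (n + 1) := by
  set M := ⌈1 / (8 * d)⌉₊
  have hM_ge : 1 / (8 * d) ≤ M := Nat.le_ceil _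
  have hM_pos : (0 : ℝ) < M := lt_of_lt_of_le (by positivity) hM_ge
  have hMd : (M : ℝ) * d ≤ 1 / 4 := by
    have h1 : (M : ℝ) < 1 / (8 * d) + 1 := Nat.ceil_lt_add_one (by positivity)
    have h2 : 1 ≤ 1 / (8 * d) := by rw [le_div_iff₀ (by positivity)]; linarith
    have h3 : 1 / (8 * d) * d = 1 / 8 := by field_simp
    nlinarith
  have hterm : ∀ n ∈ Finset.Ico M (2 * M),
      (M : ℝ) ^ α / (4 * M) ≤ ((n + 1 : ℕ) : ℝ) ^ (α - 1) * (1 - d) ^ (n + 1) := by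
    intro n hn
    obtain ⟨hMn, hn2M⟩ := Finset.mem_Ico.mp hn
    have hMk : (M : ℝ) ≤ ((n + 1 : ℕ) : ℝ) := by exact_mod_cast hMn.trans n.le_succ
    have hk2M : ((n + 1 : ℕ) : ℝ) ≤ 2 * M := by exact_mod_cast hn2M
    -- writing `k ^ (α - 1) = k ^ α / k` avoids a case split on the sign of `α - 1`
    have hweight : (M : ℝ) ^ α / (2 * M) ≤ ((n + 1 : ℕ) : ℝ) ^ (α - 1) := by
      rw [Real.rpow_sub_one (by positivity)]
      exact div_le_div₀ (by positivity) (Real.rpow_le_rpow hM_pos.le hMk hα.le) (by positivity) hk2M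
    have hgeom : 1 / 2 ≤ (1 - d) ^ (n + 1) := by
      have hbern := one_add_mul_le_pow (a := -d) (by linarith) (n + 1)
      have hnd : ((n + 1 : ℕ) : ℝ) * d ≤ 2 * M * d := by gcongr
      rw [← sub_eq_add_neg] at hbern
      push_cast at hbern hnd
      linarith
    calc (M : ℝ) ^ α / (4 * M) = (M : ℝ) ^ α / (2 * M) * (1 / 2) := by ring
      _ ≤ _ := mul_le_mul hweight hgeom (by norm_num) (by positivity)
  calc d ^ (-α) = 8 ^ α * (1 / (8 * d)) ^ α := by
        rw [Real.rpow_neg hd0.le, Real.div_rpow zero_le_one (by positivity), Real.one_rpow,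
          Real.mul_rpow (by norm_num) hd0.le]
        field_simp
    _ ≤ 8 ^ α * (M : ℝ) ^ α := by gcongr
    _ = 4 * 8 ^ α * ∑ _n ∈ Finset.Ico M (2 * M), (M : ℝ) ^ α / (4 * M) := by
        rw [Finset.sum_const, Nat.card_Ico, nsmul_eq_mul, show 2 * M - M = M by omega]
        field_simp
    _ ≤ _ := by gcongr with n hn; exact hterm n hn

theorem tsum_ofReal_natCast_add_one_rpow_eq_top {p : ℝ} (hp : -1 ≤ p) :
    ∑' n : ℕ, ENNReal.ofReal (((n + 1 : ℕ) : ℝ) ^ p) = ⊤ := by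
  refine ENNReal.tsum_coe_eq_top_iff_not_summable_coe.mpr ?_
  simp only [Real.coe_toNNReal _ (Real.rpow_nonneg (Nat.cast_nonneg _) _)]
  rw [summable_nat_add_iff 1 (f := fun n : ℕ => (n : ℝ) ^ p), Real.summable_nat_rpow]
  exact hp.not_gt

theorem tsum_ofReal_natCast_add_one_rpow_ne_top {p : ℝ} (hp : p < -1) :
    ∑' n : ℕ, ENNReal.ofReal (((n + 1 : ℕ) : ℝ) ^ p) ≠ ⊤ := by
  rw [← ofReal_tsum_of_nonneg (fun n => Real.rpow_nonneg (Nat.cast_nonneg _) _)]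
  · exact ofReal_ne_top
  · exact (summable_nat_add_iff 1 (f := fun n : ℕ => (n : ℝ) ^ p)).mpr
      (Real.summable_nat_rpow.mpr hp)

theorem ofReal_one_sub_rpow_neg_le {α q : ℝ} (hα : 0 < α) (hq0 : 0 ≤ q) (hq1 : q ≤ 1) :
    ENNReal.ofReal (1 - q) ^ (-α) ≤ ENNReal.ofReal (4 * 8 ^ α) *
      (1 + ∑' n : ℕ, ENNReal.ofReal (((n + 1 : ℕ) : ℝ) ^ (α - 1)) *
        ENNReal.ofReal (q ^ (n + 1))) := by
  have hK : ENNReal.ofReal (4 * 8 ^ α) ≠ 0 := (ofReal_pos.mpr (by positivity)).ne'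
  rcases hq1.eq_or_lt with rfl | hq1
  · simp only [sub_self, ofReal_zero, one_pow, ofReal_one, mul_one,
      tsum_ofReal_natCast_add_one_rpow_eq_top (by linarith : -1 ≤ α - 1), add_top, mul_top hK]
    exact le_top
  rcases le_or_gt q (7 / 8) with hq | hq
  · calc ENNReal.ofReal (1 - q) ^ (-α) = ENNReal.ofReal ((1 - q) ^ (-α)) :=
          ofReal_rpow_of_pos (by linarith)
      _ ≤ ENNReal.ofReal ((1 / 8) ^ (-α)) :=
          ofReal_le_ofReal (Real.rpow_le_rpow_of_nonpos (by norm_num) (by linarith) (by linarith))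
      _ = ENNReal.ofReal (8 ^ α) := by
          rw [Real.rpow_neg (by norm_num), one_div, Real.inv_rpow (by norm_num), inv_inv]
      _ ≤ ENNReal.ofReal (4 * 8 ^ α) * 1 := by
          rw [mul_one]
          exact ofReal_le_ofReal (by linarith [Real.rpow_nonneg (by norm_num : (0 : ℝ) ≤ 8) α])
      _ ≤ _ := by gcongr; exact le_self_add
  · set d := 1 - q
    have hsum := rpow_neg_le_sum_Ico hα (by linarith : 0 < d) (by linarith : d ≤ 1 / 8)
    rw [show 1 - d = q by ring] at hsum
    calc ENNReal.ofReal d ^ (-α) = ENNReal.ofReal (d ^ (-α)) := ofReal_rpow_of_pos (by linarith)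
      _ ≤ ENNReal.ofReal (4 * 8 ^ α) * ∑ n ∈ Finset.Ico ⌈1 / (8 * d)⌉₊ (2 * ⌈1 / (8 * d)⌉₊),
            ENNReal.ofReal (((n + 1 : ℕ) : ℝ) ^ (α - 1)) * ENNReal.ofReal (q ^ (n + 1)) := by
          simp_rw [← ofReal_mul (Real.rpow_nonneg (Nat.cast_nonneg _) _)]
          rw [← ofReal_sum_of_nonneg (fun n _ => by positivity), ← ofReal_mul (by positivity)]
          exact ofReal_le_ofReal hsum
      _ ≤ _ := by gcongr; exact (ENNReal.sum_le_tsum _).trans le_add_self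

theorem ENNReal.exists_forall_le_of_limsup_ne_top {f : ℕ → ℝ≥0∞} (hf : ∀ n, f n ≠ ⊤)
    (h : limsup f atTop ≠ ⊤) : ∃ C ≠ ⊤, ∀ n, f n ≤ C := by
  obtain ⟨N, hN⟩ := eventually_atTop.mp
    (eventually_lt_of_limsup_lt (ENNReal.lt_add_right h one_ne_zero))
  refine ⟨limsup f atTop + 1 + ∑ n ∈ Finset.range N, f n, ?_, fun n => ?_⟩
  · exact add_ne_top.mpr ⟨add_ne_top.mpr ⟨h, one_ne_top⟩, sum_ne_top.mpr fun n _ => hf n⟩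
  rcases lt_or_ge n N with hn | hn
  · exact (Finset.single_le_sum (fun _ _ => zero_le) (Finset.mem_range.mpr hn)).trans le_add_self
  · exact (hN n hn).le.trans le_self_add

theorem limsup_rpow_mul_tsum_pow_eq_top {ι : Type*} {α ε : ℝ} (hα : 0 < α) (hε : 0 < ε)
    {q : ι → ℝ} {w : ι → ℝ≥0∞} (hq0 : ∀ i, 0 ≤ q i) (hq1 : ∀ i, q i ≤ 1) (hw : ∑' i, w i ≠ ⊤)
    (hdiv : ∑' i, ENNReal.ofReal (1 - q i) ^ (-α) * w i = ⊤) :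
    limsup (fun n : ℕ => ENNReal.ofReal ((n : ℝ) ^ (α + ε)) *
      ∑' i, ENNReal.ofReal (q i ^ n) * w i) atTop = ⊤ := by
  set A : ℕ → ℝ≥0∞ := fun n => ∑' i, ENNReal.ofReal (q i ^ n) * w i
  have hA : ∀ n, A n ≠ ⊤ := fun n => ne_top_of_le_ne_top hw <| ENNReal.tsum_le_tsum fun i =>
    mul_le_of_le_one_left zero_le (ofReal_le_one.mpr (pow_le_one₀ (hq0 i) (hq1 i)))
  by_contra h
  obtain ⟨C, hC, hCA⟩ := ENNReal.exists_forall_le_of_limsup_ne_top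
    (fun n => mul_ne_top ofReal_ne_top (hA n)) h
  have hweighted : ∑' n : ℕ, ENNReal.ofReal (((n + 1 : ℕ) : ℝ) ^ (α - 1)) * A (n + 1) ≠ ⊤ := by
    refine ne_top_of_le_ne_top (mul_ne_top hC
      (tsum_ofReal_natCast_add_one_rpow_ne_top (by linarith : -1 - ε < -1))) ?_
    rw [← ENNReal.tsum_mul_left]
    refine ENNReal.tsum_le_tsum fun n => ?_
    have hn : (0 : ℝ) < ((n + 1 : ℕ) : ℝ) := by positivity
    rw [show α - 1 = (-1 - ε) + (α + ε) by ring, Real.rpow_add hn,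
      ofReal_mul (Real.rpow_nonneg hn.le _), mul_assoc, mul_comm C]
    exact mul_le_mul_right (hCA (n + 1)) _
  have hdom : ∑' i, ENNReal.ofReal (1 - q i) ^ (-α) * w i ≤ ENNReal.ofReal (4 * 8 ^ α) *
      (∑' i, w i + ∑' n : ℕ, ENNReal.ofReal (((n + 1 : ℕ) : ℝ) ^ (α - 1)) * A (n + 1)) := by
    calc ∑' i, ENNReal.ofReal (1 - q i) ^ (-α) * w i
        ≤ ∑' i, ENNReal.ofReal (4 * 8 ^ α) * (1 + ∑' n : ℕ,
            ENNReal.ofReal (((n + 1 : ℕ) : ℝ) ^ (α - 1)) * ENNReal.ofReal (q i ^ (n + 1))) * w i :=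
          ENNReal.tsum_le_tsum fun i =>
            mul_le_mul_left (ofReal_one_sub_rpow_neg_le hα (hq0 i) (hq1 i)) _
      _ = _ := by
          simp only [A, mul_assoc, add_mul, one_mul, ENNReal.tsum_mul_left, ENNReal.tsum_add]
          congr 2
          simp only [← ENNReal.tsum_mul_right, ← ENNReal.tsum_mul_left, mul_assoc]
          exact ENNReal.tsum_comm
  exact (mul_ne_top ofReal_ne_top (add_ne_top.mpr ⟨hw, hweighted⟩)) (top_le_iff.mp (hdiv ▸ hdom))

theorem ofReal_rpow_neg_le_of_le_mul {a b c α : ℝ} (hα : 0 < α) (hc : 0 < c) (ha : 0 ≤ a)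
    (hab : a ≤ c * b) :
    ENNReal.ofReal b ^ (-α) ≤ ENNReal.ofReal c ^ α * ENNReal.ofReal a ^ (-α) := by
  rcases ha.eq_or_lt with rfl | ha
  · rw [ofReal_zero, zero_rpow_of_neg (by linarith), mul_top]
    · exact le_top
    · exact (rpow_pos (ofReal_pos.mpr hc) ofReal_ne_top).ne'
  have hb : 0 < b := pos_of_mul_pos_right (ha.trans_le hab) hc.le
  rw [ofReal_rpow_of_pos hb, ofReal_rpow_of_pos hc, ofReal_rpow_of_pos ha,
    ← ofReal_mul (by positivity)]
  refine ofReal_le_ofReal ?_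
  calc b ^ (-α) ≤ (a / c) ^ (-α) :=
        Real.rpow_le_rpow_of_nonpos (by positivity) ((div_le_iff₀' hc).mpr hab) (by linarith)
    _ = c ^ α * a ^ (-α) := by
        rw [Real.div_rpow ha.le hc.le, Real.rpow_neg hc.le, div_inv_eq_mul, mul_comm]

theorem ProbabilityTheory.iIndepFun.indepFun_of_measurable_iSup {Ω ι β γ : Type*}
    [MeasurableSpace Ω] {μ : Measure Ω} [mβ : MeasurableSpace β] [MeasurableSpace γ]
    {f : ι → Ω → β}
    (hf : iIndepFun f μ) (hmeas : ∀ i, Measurable (f i)) {S : Set ι} {j : ι} (hj : j ∉ S)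
    {g : Ω → γ} (hg : Measurable[⨆ i ∈ S, mβ.comap (f i)] g) : IndepFun g (f j) μ := by
  rw [IndepFun_iff_Indep]
  have h := indep_iSup_of_disjoint (fun i => (hmeas i).comap_le) hf.iIndep
    (Set.disjoint_singleton_right.mpr hj)
  refine indep_of_indep_of_le_left (indep_of_indep_of_le_right h ?_) hg.comap_le
  exact le_iSup₂ (f := fun i (_ : i ∈ ({j} : Set ι)) => mβ.comap (f i)) j rfl

section InnerProductSpace

variable {H : Type*} [NormedAddCommGroup H] [InnerProductSpace ℝ H]

theorem norm_sub_smul_inner_le (z x : H) {γ : ℝ} (hγ : 0 ≤ γ) (hx : γ * ‖x‖ ^ 2 ≤ 2) :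
    ‖z - (γ * ⟪z, x⟫) • x‖ ≤ ‖z‖ := by
  have hsq : ‖z - (γ * ⟪z, x⟫) • x‖ ^ 2 = ‖z‖ ^ 2 - γ * ⟪z, x⟫ ^ 2 * (2 - γ * ‖x‖ ^ 2) := by
    rw [norm_sub_sq_real, inner_smul_right, norm_smul, mul_pow, Real.norm_eq_abs, sq_abs]
    ring
  refine (pow_le_pow_iff_left₀ (norm_nonneg _) (norm_nonneg _) two_ne_zero).mp ?_
  rw [hsq]
  nlinarith [mul_nonneg (mul_nonneg hγ (sq_nonneg ⟪z, x⟫)) (sub_nonneg.mpr hx)]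

theorem norm_sgd_sub_le {θ x : ℕ → H} {θstar : H} {γ : ℝ} (hγ : 0 ≤ γ)
    (hx : ∀ n, γ * ‖x (n + 1)‖ ^ 2 ≤ 2) (h0 : θ 0 = 0)
    (hrec : ∀ n, θ (n + 1) = θ n - (γ * ⟪θ n - θstar, x (n + 1)⟫) • x (n + 1)) (n : ℕ) :
    ‖θ n - θstar‖ ≤ ‖θstar‖ := by
  induction n with
  | zero => rw [h0, zero_sub, norm_neg]
  | succ n ih =>
    rw [hrec, sub_right_comm]
    exact (norm_sub_smul_inner_le _ _ hγ (hx n)).trans ih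

theorem HilbertBasis.tsum_ofReal_inner_sq {ι : Type*} (b : HilbertBasis ι ℝ H) (x : H) :
    ∑' i, ENNReal.ofReal (⟪x, b i⟫ ^ 2) = ENNReal.ofReal (‖x‖ ^ 2) := by
  have h : HasSum (fun i => ⟪x, b i⟫ ^ 2) (‖x‖ ^ 2) := by
    simpa only [sq, real_inner_comm x, real_inner_self_eq_norm_sq] using
      b.hasSum_inner_mul_inner x x
  rw [← ofReal_tsum_of_nonneg (fun _ => sq_nonneg _) h.summable, h.tsum_eq]

theorem norm_inner_smul_self_le (x v : H) (hv : ‖v‖ = 1) : ‖⟪x, v⟫ • x‖ ≤ ‖x‖ ^ 2 := by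
  rw [norm_smul, Real.norm_eq_abs, sq]
  exact mul_le_mul_of_nonneg_right ((abs_real_inner_le_norm x v).trans_eq (by rw [hv, mul_one]))
    (norm_nonneg x)

variable {Ω : Type*} [MeasurableSpace Ω] {P : Measure Ω}

theorem integrable_inner_smul_self [IsFiniteMeasure P] {Y : Ω → H} {v : H} {R : ℝ}
    (hY : AEStronglyMeasurable Y P) (hv : ‖v‖ = 1) (hYR : ∀ᵐ ω ∂P, ‖Y ω‖ ^ 2 ≤ R) :
    Integrable (fun ω => ⟪Y ω, v⟫ • Y ω) P :=
  Integrable.of_bound ((hY.inner aestronglyMeasurable_const).smul hY) R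
    (hYR.mono fun _ h => (norm_inner_smul_self_le _ _ hv).trans h)

theorem le_of_integral_inner_smul_self_eq [IsProbabilityMeasure P] {Y : Ω → H} {v : H} {R s : ℝ}
    (hv : ‖v‖ = 1) (hYR : ∀ᵐ ω ∂P, ‖Y ω‖ ^ 2 ≤ R) (hcov : ∫ ω, ⟪Y ω, v⟫ • Y ω ∂P = s • v) :
    s ≤ R := by
  have h := norm_integral_le_of_norm_le_const (μ := P)
    (hYR.mono fun ω h => (norm_inner_smul_self_le (Y ω) v hv).trans h)
  rw [hcov, norm_smul, hv, mul_one, probReal_univ, mul_one] at h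
  exact (le_abs_self s).trans h

variable [CompleteSpace H]

theorem HilbertBasis.integral_inner_smul_eq {ι : Type*} [DecidableEq ι] (b : HilbertBasis ι ℝ H)
    {Y : Ω → H} {i : ι} {s : ℝ} (hY : Integrable (fun ω => ⟪Y ω, b i⟫ • Y ω) P)
    (hcov : ∀ j, ∫ ω, ⟪Y ω, b i⟫ * ⟪Y ω, b j⟫ ∂P = if i = j then s else 0) :
    ∫ ω, ⟪Y ω, b i⟫ • Y ω ∂P = s • b i := by
  refine b.repr.injective (lp.ext (funext fun j => ?_))
  rw [b.repr_apply_apply, b.repr_apply_apply, ← integral_inner hY, inner_smul_right,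
    orthonormal_iff_ite.mp b.orthonormal j i]
  simp_rw [inner_smul_right, real_inner_comm _ (b j)]
  rw [hcov j]
  rcases eq_or_ne i j with rfl | hij
  · simp
  · simp [hij, hij.symm]

theorem ofReal_norm_integral_sq_le [IsProbabilityMeasure P] {Z : Ω → H} (hZ : Integrable Z P)
    (hZ2 : Integrable (fun ω => ‖Z ω‖ ^ 2) P) :
    ENNReal.ofReal (‖∫ ω, Z ω ∂P‖ ^ 2) ≤ ∫⁻ ω, ENNReal.ofReal (‖Z ω‖ ^ 2) ∂P := by
  have hconv : ConvexOn ℝ Set.univ (fun x : H => ‖x‖ ^ 2) :=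
    (convexOn_norm convex_univ).pow (fun _ _ => norm_nonneg _) 2
  rw [← ofReal_integral_eq_lintegral_ofReal hZ2 (ae_of_all _ fun _ => sq_nonneg _)]
  exact ofReal_le_ofReal (hconv.map_integral_le (by fun_prop) isClosed_univ
    (ae_of_all _ fun _ => Set.mem_univ _) hZ hZ2)

theorem ProbabilityTheory.IndepFun.inner_integral_sub_smul_inner {Z Y : Ω → H} {v : H} {γ s : ℝ}
    [MeasurableSpace H] [BorelSpace H]
    (hZY : IndepFun Z Y P) (hZ : Integrable Z P)
    (hZ' : Integrable (fun ω => Z ω - (γ * ⟪Z ω, Y ω⟫) • Y ω) P)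
    (hY : Integrable (fun ω => ⟪Y ω, v⟫ • Y ω) P) (hcov : ∫ ω, ⟪Y ω, v⟫ • Y ω ∂P = s • v) :
    ⟪∫ ω, Z ω - (γ * ⟪Z ω, Y ω⟫) • Y ω ∂P, v⟫ = (1 - γ * s) * ⟪∫ ω, Z ω ∂P, v⟫ := by
  have hZW : IndepFun Z (fun ω => ⟪Y ω, v⟫ • Y ω) P :=
    hZY.comp measurable_id (continuous_id.inner continuous_const |>.smul continuous_id).measurable
  have hprod : ∫ ω, ⟪Z ω, ⟪Y ω, v⟫ • Y ω⟫ ∂P = ⟪∫ ω, Z ω ∂P, ∫ ω, ⟪Y ω, v⟫ • Y ω ∂P⟫ :=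
    hZW.integral_bilin hZ hY (innerSL ℝ)
  have hint : Integrable (fun ω => ⟪Z ω, ⟪Y ω, v⟫ • Y ω⟫) P :=
    hZW.integrable_bilin hZ hY (innerSL ℝ)
  have hpt : ∀ ω, ⟪v, Z ω - (γ * ⟪Z ω, Y ω⟫) • Y ω⟫ = ⟪v, Z ω⟫ - γ * ⟪Z ω, ⟪Y ω, v⟫ • Y ω⟫ := by
    intro ω
    rw [inner_sub_right, inner_smul_right, inner_smul_right, real_inner_comm v]
    ring
  rw [real_inner_comm, ← integral_inner hZ', funext hpt, integral_sub (hZ.const_inner v)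
    (hint.const_mul γ), integral_const_mul, integral_inner hZ,
    hprod, hcov, inner_smul_right, real_inner_comm v]
  ring

end InnerProductSpace

section SGD

variable {H : Type*} [NormedAddCommGroup H] [InnerProductSpace ℝ H] [mH : MeasurableSpace H]
  [BorelSpace H] [SecondCountableTopology H] {Ω : Type*}
  {X : ℕ → Ω → H} {θstar : H} {γ : ℝ} {θ : ℕ → Ω → H}

theorem measurable_sgd_iSup (h0 : ∀ ω, θ 0 ω = 0)
    (hrec : ∀ n ω, θ (n + 1) ω = θ n ω - (γ * ⟪θ n ω - θstar, X (n + 1) ω⟫) • X (n + 1) ω)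
    (n : ℕ) : Measurable[⨆ k ∈ Set.Iic n, mH.comap (X k)] (θ n) := by
  induction n with
  | zero => rw [funext h0]; exact measurable_const
  | succ n ih =>
    have hθ : Measurable[⨆ k ∈ Set.Iic (n + 1), mH.comap (X k)] (θ n) :=
      ih.mono (biSup_mono fun k hk => Set.Iic_subset_Iic.mpr n.le_succ hk) le_rfl
    have hX : Measurable[⨆ k ∈ Set.Iic (n + 1), mH.comap (X k)] (X (n + 1)) :=
      Measurable.of_comap_le (le_iSup₂ (f := fun k (_ : k ∈ Set.Iic (n + 1)) => mH.comap (X k))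
        (n + 1) (Set.mem_Iic.mpr le_rfl))
    rw [funext (hrec n)]
    exact hθ.sub ((((hθ.sub_const θstar).inner hX).const_mul γ).smul hX)

variable [CompleteSpace H] [MeasurableSpace Ω] {P : Measure Ω} [IsProbabilityMeasure P]

theorem inner_integral_sgd_sub_eq {v : H} {s : ℝ} (hXmeas : ∀ n, Measurable (X n))
    (hindep : iIndepFun X P) (h0 : ∀ ω, θ 0 ω = 0)
    (hrec : ∀ n ω, θ (n + 1) ω = θ n ω - (γ * ⟪θ n ω - θstar, X (n + 1) ω⟫) • X (n + 1) ω)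
    (hZ : ∀ n, Integrable (fun ω => θ n ω - θstar) P)
    (hY : ∀ n, Integrable (fun ω => ⟪X (n + 1) ω, v⟫ • X (n + 1) ω) P)
    (hcov : ∀ n, ∫ ω, ⟪X (n + 1) ω, v⟫ • X (n + 1) ω ∂P = s • v) (n : ℕ) :
    ⟪∫ ω, θ n ω - θstar ∂P, v⟫ = -((1 - γ * s) ^ n * ⟪θstar, v⟫) := by
  induction n with
  | zero => simp [h0]
  | succ n ih =>
    have hstep : (fun ω => θ (n + 1) ω - θstar) =
        fun ω => θ n ω - θstar - (γ * ⟪θ n ω - θstar, X (n + 1) ω⟫) • X (n + 1) ω :=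
      funext fun ω => by rw [hrec, sub_right_comm]
    have hZY : IndepFun (fun ω => θ n ω - θstar) (X (n + 1)) P :=
      (hindep.indepFun_of_measurable_iSup hXmeas (by simp) (measurable_sgd_iSup h0 hrec n)).comp
        (measurable_id.sub_const θstar) measurable_id
    rw [hstep, hZY.inner_integral_sub_smul_inner (hZ n) (hstep ▸ hZ (n + 1)) (hY n) (hcov n), ih,
      pow_succ]
    ring

theorem tsum_pow_mul_le_lintegral_sgd {ι : Type*} (b : HilbertBasis ι ℝ H) (μ : ι → ℝ)
    {R₀ : ℝ} (hXmeas : ∀ n, Measurable (X n)) (hindep : iIndepFun X P)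
    (hcov : ∀ n i, ∫ ω, ⟪X n ω, b i⟫ • X n ω ∂P = μ i • b i)
    (hbound : ∀ n, ∀ᵐ ω ∂P, ‖X n ω‖ ^ 2 ≤ R₀) (hγ0 : 0 ≤ γ) (hγR₀ : γ * R₀ ≤ 2)
    (h0 : ∀ ω, θ 0 ω = 0)
    (hrec : ∀ n ω, θ (n + 1) ω = θ n ω - (γ * ⟪θ n ω - θstar, X (n + 1) ω⟫) • X (n + 1) ω)
    (n : ℕ) :
    ∑' i, ENNReal.ofReal (((1 - γ * μ i) ^ 2) ^ n) * ENNReal.ofReal (⟪θstar, b i⟫ ^ 2)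
      ≤ ∫⁻ ω, ENNReal.ofReal (‖θ n ω - θstar‖ ^ 2) ∂P := by
  have hθ : ∀ k, Measurable (θ k) := fun k =>
    (measurable_sgd_iSup h0 hrec k).mono (iSup₂_le fun j _ => (hXmeas j).comap_le) le_rfl
  have herr : ∀ᵐ ω ∂P, ∀ n, ‖θ n ω - θstar‖ ≤ ‖θstar‖ := by
    filter_upwards [ae_all_iff.mpr hbound] with ω hω
    exact norm_sgd_sub_le (θ := fun n => θ n ω) (x := fun n => X n ω) hγ0
      (fun n => (mul_le_mul_of_nonneg_left (hω (n + 1)) hγ0).trans hγR₀) (h0 ω) (fun n => hrec n ω)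
  have hZ : ∀ k, Integrable (fun ω => θ k ω - θstar) P := fun k =>
    Integrable.of_bound ((hθ k).sub_const _).aestronglyMeasurable _ (herr.mono fun _ h => h k)
  have hZ2 : Integrable (fun ω => ‖θ n ω - θstar‖ ^ 2) P :=
    Integrable.of_bound (((hθ n).sub_const _).norm.pow_const 2).aestronglyMeasurable (‖θstar‖ ^ 2)
      (herr.mono fun ω h => by
        rw [Real.norm_eq_abs, abs_of_nonneg (by positivity)]
        exact pow_le_pow_left₀ (norm_nonneg _) (h n) 2)
  have hmean : ∀ i, ⟪∫ ω, θ n ω - θstar ∂P, b i⟫ = -((1 - γ * μ i) ^ n * ⟪θstar, b i⟫) :=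
    fun i => inner_integral_sgd_sub_eq hXmeas hindep h0 hrec hZ
      (fun _ => integrable_inner_smul_self (hXmeas _).aestronglyMeasurable (b.orthonormal.1 i)
        (hbound _)) (fun n => hcov (n + 1) i) n
  calc ∑' i, ENNReal.ofReal (((1 - γ * μ i) ^ 2) ^ n) * ENNReal.ofReal (⟪θstar, b i⟫ ^ 2)
      = ∑' i, ENNReal.ofReal (⟪∫ ω, θ n ω - θstar ∂P, b i⟫ ^ 2) := by
        refine tsum_congr fun i => ?_
        rw [← ofReal_mul (pow_nonneg (sq_nonneg _) n), hmean, neg_sq, mul_pow, ← pow_mul,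
          ← pow_mul, mul_comm 2 n]
    _ = ENNReal.ofReal (‖∫ ω, θ n ω - θstar ∂P‖ ^ 2) := b.tsum_ofReal_inner_sq _
    _ ≤ _ := ofReal_norm_integral_sq_le (hZ n) hZ2

end SGD

theorem tsum_ofReal_one_sub_sq_rpow_neg_mul_eq_top {H : Type*} [NormedAddCommGroup H]
    [InnerProductSpace ℝ H] {b : HilbertBasis ℕ ℝ H} {μ : ℕ → ℝ} {α γ : ℝ} {θ : H} (hα : 0 < α)
    (hγ : 0 < γ) (hμ : ∀ i, 0 ≤ μ i) (hγμ : ∀ i, γ * μ i ≤ 2) (h : specPow b μ α θ = ⊤) :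
    ∑' i, ENNReal.ofReal (1 - (1 - γ * μ i) ^ 2) ^ (-α) * ENNReal.ofReal (⟪θ, b i⟫ ^ 2) = ⊤ := by
  have hle : ∀ i, ENNReal.ofReal (μ i) ^ (-α) * ENNReal.ofReal (⟪θ, b i⟫ ^ 2) ≤
      ENNReal.ofReal (2 * γ) ^ α *
        (ENNReal.ofReal (1 - (1 - γ * μ i) ^ 2) ^ (-α) * ENNReal.ofReal (⟪θ, b i⟫ ^ 2)) :=
    fun i => by
      rw [← mul_assoc]
      refine mul_le_mul_left (ofReal_rpow_neg_le_of_le_mul hα (by positivity) ?_ ?_) _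
      · nlinarith [mul_nonneg hγ.le (hμ i), hγμ i]
      · nlinarith [sq_nonneg (γ * μ i)]
  have htop := ENNReal.tsum_le_tsum hle
  rw [← specPow, h, ENNReal.tsum_mul_left, top_le_iff, mul_eq_top] at htop
  rcases htop with h | h
  · exact h.2
  · exact absurd h.1 (rpow_ne_top_of_nonneg hα.le ofReal_ne_top)

/-- Theorem 2, reconstruction error lower bound: under the noiseless
linear model with `0 < γ ≤ 1/R₀` and `θ* ∉ Σ^{ᾱ/2}(H)` (i.e. `‖Σ^{-ᾱ/2}θ*‖² = ∞`),
for every `ε > 0` the reconstruction error is not dominated by `n^{-(ᾱ+ε)}`: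
`limsup_n n^{ᾱ+ε} E[‖θ_n − θ*‖²] = ∞`. -/
theorem sgd_noiseless_reconstruction_lower_bound
    {H : Type*} [NormedAddCommGroup H] [InnerProductSpace ℝ H] [CompleteSpace H]
    [MeasurableSpace H] [BorelSpace H] [SecondCountableTopology H]
    {Ω : Type*} [MeasurableSpace Ω] (P : Measure Ω) [IsProbabilityMeasure P]
    (b : HilbertBasis ℕ ℝ H) (μ : ℕ → ℝ) (hμ : ∀ i, 0 ≤ μ i)
    (X : ℕ → Ω → H) (hXmeas : ∀ n, Measurable (X n))
    (hindep : iIndepFun X P)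
    (hident : ∀ n, IdentDistrib (X n) (X 0) P P)
    (hcov : ∀ i j, (∫ ω, (inner ℝ (X 0 ω) (b i) : ℝ) * (inner ℝ (X 0 ω) (b j) : ℝ) ∂P)
      = if i = j then μ i else 0)
    (θstar : H) (ᾱ γ R₀ : ℝ) (hᾱ : 0 < ᾱ)
    (hbound : ∀ n, ∀ᵐ ω ∂P, ‖X n ω‖ ^ 2 ≤ R₀)
    (hirr : specPow b μ ᾱ θstar = ⊤)
    (hγ0 : 0 < γ) (hγ : γ ≤ 1 / R₀)
    (θ : ℕ → Ω → H) (h0 : ∀ ω, θ 0 ω = 0)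
    (hrec : ∀ n ω, θ (n + 1) ω = θ n ω
      - (γ * (inner ℝ (θ n ω - θstar) (X (n + 1) ω) : ℝ)) • X (n + 1) ω) :
    ∀ ε : ℝ, 0 < ε →
      Filter.limsup (fun n : ℕ =>
          ENNReal.ofReal ((n : ℝ) ^ (ᾱ + ε))
            * ∫⁻ ω, ENNReal.ofReal (‖θ n ω - θstar‖ ^ 2) ∂P) atTop = ⊤ := by
  intro ε hε
  have hR₀ : 0 < R₀ := one_div_pos.mp (hγ0.trans_le hγ)
  have hγR₀ : γ * R₀ ≤ 1 := (le_div_iff₀ hR₀).mp hγ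
  have hcovX : ∀ n i, ∫ ω, ⟪X n ω, b i⟫ • X n ω ∂P = μ i • b i := fun n i => by
    refine ((hident n).comp (u := fun x => ⟪x, b i⟫ • x)
      (continuous_id.inner continuous_const |>.smul continuous_id).measurable).integral_eq.trans ?_
    exact b.integral_inner_smul_eq (integrable_inner_smul_self (hXmeas 0).aestronglyMeasurable
      (b.orthonormal.1 i) (hbound 0)) (hcov i)
  have hγμ : ∀ i, γ * μ i ≤ 1 := fun i => (mul_le_mul_of_nonneg_left
    (le_of_integral_inner_smul_self_eq (b.orthonormal.1 i) (hbound 0) (hcovX 0 i)) hγ0.le).trans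
      hγR₀
  have hdiv := tsum_ofReal_one_sub_sq_rpow_neg_mul_eq_top hᾱ hγ0 hμ
    (fun i => (hγμ i).trans one_le_two) hirr
  have hspec := limsup_rpow_mul_tsum_pow_eq_top hᾱ hε (fun i => sq_nonneg (1 - γ * μ i))
    (fun i => by nlinarith [mul_nonneg hγ0.le (hμ i), hγμ i])
    (by rw [b.tsum_ofReal_inner_sq]; exact ofReal_ne_top) hdiv
  refine top_unique (hspec.symm.le.trans (limsup_le_limsup (Eventually.of_forall fun n => ?_)))
  exact mul_le_mul_right (tsum_pow_mul_le_lintegral_sgd b μ hXmeas hindep hcovX hbound hγ0.le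
    (by linarith) h0 hrec n) _
end
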